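/- arXiv:1705.08941 — 7 statements merged into one kernel-verified Lean document; each statement's English description precedes it below -/
import Mathlib

section
/- For the multistage convex problem with dynamic programming recursion Q_t(x_{t-1}) = inf{ f_t(x_t,x_{t-1}) + Q_{t+1}(x_t) : x_t ∈ X_t, g_t(x_t,x_{t-1}) ≤ 0, A_t x_t + B_t x_{t-1} = b_t } and Q_{T+1} ≡ 0, under assumptions (H1)-(a)–(d), each Q_t is convex, finite on X_{t-1}^ε, and continuous on X_{t-1}. -/
/-!
Backward induction on `t`. The recursion exhibits `Q t` as the inf-projection of the jointly
convex stage cost `(xₜ, xₜ₋₁) ↦ fₜ(xₜ, xₜ₋₁) + Q_{t+1}(xₜ)` over the convex graph of the stage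
constraints, so `Q t` is convex as soon as it never takes the value `⊥`. It never does: each
fibre of the constraint graph is a closed subset of the compact `Xₜ`, and the stage cost is lower
semicontinuous on it (`Q_{t+1}` being continuous on `Xₜ` by induction), so the infimum is
attained. Recourse on `X_{t-1}^ε` together with `dom fₜ ⊇ Xₜ × X_{t-1}^ε` makes `Q t` finite on
the fattening, and a finite convex function is continuous on the interior of its domain, which
contains `X_{t-1}`.
-/

open Matrix Metric Set

/-- `EReal` is not an `ℝ`-module, so Mathlib's `ConvexOn` does not apply; this is the convexity
inequality of the statement, with `EReal` products. -/
def ERealConvex {E : Type*} [AddCommGroup E] [Module ℝ E] (φ : E → EReal) : Prop :=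
  ∀ x₁ x₂, ∀ s : ℝ, 0 ≤ s → s ≤ 1 →
    φ (s • x₁ + (1 - s) • x₂) ≤ (s : EReal) * φ x₁ + ((1 - s : ℝ) : EReal) * φ x₂

lemma EReal.le_coe_mul_add_coe_mul_of_forall_lt {y₁ y₂ z : EReal} {s : ℝ} (hs0 : 0 < s)
    (hs1 : s < 1) (hy₁ : y₁ ≠ ⊥) (hy₂ : y₂ ≠ ⊥)
    (h : ∀ a₁ a₂ : ℝ, y₁ < a₁ → y₂ < a₂ → z ≤ (s : EReal) * a₁ + ((1 - s : ℝ) : EReal) * a₂) :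
    z ≤ (s : EReal) * y₁ + ((1 - s : ℝ) : EReal) * y₂ := by
  have hs1' : (0 : ℝ) < 1 - s := by linarith
  induction y₁ using EReal.rec with
  | bot => exact absurd rfl hy₁
  | top =>
    have hy₂' : ((1 - s : ℝ) : EReal) * y₂ ≠ ⊥ := (EReal.mul_ne_bot _ _).2
      ⟨.inl (EReal.coe_ne_bot _), .inr hy₂, .inl (EReal.coe_ne_top _),
        .inl (EReal.coe_nonneg.2 hs1'.le)⟩
    rw [EReal.coe_mul_top_of_pos hs0, EReal.top_add_of_ne_bot hy₂']
    exact le_top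
  | coe r₁ =>
  induction y₂ using EReal.rec with
  | bot => exact absurd rfl hy₂
  | top =>
    rw [EReal.coe_mul_top_of_pos hs1', EReal.add_top_of_ne_bot (by simp [← EReal.coe_mul])]
    exact le_top
  | coe r₂ =>
  rw [← EReal.coe_mul, ← EReal.coe_mul, ← EReal.coe_add, ← EReal.le_of_forall_lt_iff_le]
  intro c hc
  set δ := c - (s * r₁ + (1 - s) * r₂)
  have hδ : 0 < δ := by linarith [EReal.coe_lt_coe_iff.1 hc]
  calc z ≤ (s : EReal) * ((r₁ + δ : ℝ) : EReal) + ((1 - s : ℝ) : EReal) * ((r₂ + δ : ℝ) : EReal) :=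
        h _ _ (EReal.coe_lt_coe_iff.2 (by linarith)) (EReal.coe_lt_coe_iff.2 (by linarith))
    _ = c := by
        rw [← EReal.coe_mul, ← EReal.coe_mul, ← EReal.coe_add, EReal.coe_eq_coe_iff]
        ring

namespace ERealConvex

section Module

variable {E F : Type*} [AddCommGroup E] [Module ℝ E] [AddCommGroup F] [Module ℝ F]
  {φ ψ : E → EReal}

lemma of_mem_Ioo (h : ∀ x₁ x₂, ∀ s : ℝ, 0 < s → s < 1 →
    φ (s • x₁ + (1 - s) • x₂) ≤ (s : EReal) * φ x₁ + ((1 - s : ℝ) : EReal) * φ x₂) :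
    ERealConvex φ := by
  intro x₁ x₂ s hs0 hs1
  rcases hs0.eq_or_lt with rfl | hs0
  · simp
  rcases hs1.eq_or_lt with rfl | hs1
  · simp
  exact h x₁ x₂ s hs0 hs1

lemma add (hφ : ERealConvex φ) (hψ : ERealConvex ψ) : ERealConvex (φ + ψ) := by
  intro x₁ x₂ s hs0 hs1
  calc φ (s • x₁ + (1 - s) • x₂) + ψ (s • x₁ + (1 - s) • x₂)
      ≤ ((s : EReal) * φ x₁ + ((1 - s : ℝ) : EReal) * φ x₂)
        + ((s : EReal) * ψ x₁ + ((1 - s : ℝ) : EReal) * ψ x₂) :=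
        add_le_add (hφ x₁ x₂ s hs0 hs1) (hψ x₁ x₂ s hs0 hs1)
    _ = (s : EReal) * (φ x₁ + ψ x₁) + ((1 - s : ℝ) : EReal) * (φ x₂ + ψ x₂) := by
        rw [add_add_add_comm,
          EReal.left_distrib_of_nonneg_of_ne_top (by exact_mod_cast hs0) (EReal.coe_ne_top _),
          EReal.left_distrib_of_nonneg_of_ne_top (by exact_mod_cast sub_nonneg.2 hs1)
            (EReal.coe_ne_top _)]

lemma comp_linearMap (hφ : ERealConvex φ) (L : F →ₗ[ℝ] E) : ERealConvex (φ ∘ L) :=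
  fun x₁ x₂ s hs0 hs1 => by
    simpa only [Function.comp, map_add, map_smul] using hφ (L x₁) (L x₂) s hs0 hs1

end Module

section Normed

variable {E : Type*} [NormedAddCommGroup E] [NormedSpace ℝ E] [FiniteDimensional ℝ E]
  {φ : E → EReal}

lemma continuousOn_interior (hφ : ERealConvex φ) {D : Set E} (hD : Convex ℝ D)
    (hfin : ∀ x ∈ D, φ x ≠ ⊤ ∧ φ x ≠ ⊥) : ContinuousOn φ (interior D) := by
  have hcoe : ∀ x ∈ D, ((φ x).toReal : EReal) = φ x := fun x hx =>
    EReal.coe_toReal (hfin x hx).1 (hfin x hx).2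
  have hconv : ConvexOn ℝ D fun x => (φ x).toReal := by
    refine ⟨hD, fun x₁ hx₁ x₂ hx₂ a c ha hc hac => ?_⟩
    obtain rfl : c = 1 - a := by linarith
    have h := hφ x₁ x₂ a ha (by linarith)
    rwa [← hcoe x₁ hx₁, ← hcoe x₂ hx₂, ← hcoe _ (hD hx₁ hx₂ ha hc hac), ← EReal.coe_mul,
      ← EReal.coe_mul, ← EReal.coe_add, EReal.coe_le_coe_iff] at h
  exact (continuous_coe_real_ereal.comp_continuousOn hconv.continuousOn_interior).congr
    fun x hx => (hcoe x (interior_subset hx)).symm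

lemma continuousOn_of_cthickening (hφ : ERealConvex φ) {K : Set E} (hK : Convex ℝ K) {ε : ℝ}
    (hε : 0 < ε) (hfin : ∀ x ∈ cthickening ε K, φ x ≠ ⊤ ∧ φ x ≠ ⊥) : ContinuousOn φ K :=
  (hφ.continuousOn_interior (hK.cthickening ε) hfin).mono
    ((self_subset_thickening hε K).trans (thickening_subset_interior_cthickening ε K))

end Normed

end ERealConvex

section InfProj

variable {E F : Type*} {G : Set (E × F)} {H : E × F → EReal} {u : E} {x : F}

/-- Rockafellar's inf-projection of `H` along `G`; it is `⊤` where the fibre of `G` is empty. -/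
noncomputable def infProj (G : Set (E × F)) (H : E × F → EReal) (x : F) : EReal :=
  sInf {v | ∃ u, (u, x) ∈ G ∧ v = H (u, x)}

lemma infProj_le (h : (u, x) ∈ G) : infProj G H x ≤ H (u, x) :=
  sInf_le ⟨u, h, rfl⟩

lemma exists_lt_of_infProj_lt {a : EReal} (h : infProj G H x < a) :
    ∃ u, (u, x) ∈ G ∧ H (u, x) < a := by
  obtain ⟨_, ⟨u, hu, rfl⟩, hlt⟩ := sInf_lt_iff.1 h
  exact ⟨u, hu, hlt⟩

lemma infProj_ne_bot [TopologicalSpace E] (hG : IsCompact {u | (u, x) ∈ G})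
    (hH : LowerSemicontinuousOn (fun u => H (u, x)) {u | (u, x) ∈ G})
    (hbot : ∀ u, H (u, x) ≠ ⊥) : infProj G H x ≠ ⊥ := by
  intro h
  obtain ⟨u, hu, -⟩ := exists_lt_of_infProj_lt (h ▸ bot_lt_top : infProj G H x < ⊤)
  obtain ⟨u₀, -, hmin⟩ := hH.exists_isMinOn ⟨u, hu⟩ hG
  refine hbot u₀ (le_bot_iff.1 (h ▸ le_sInf ?_))
  rintro _ ⟨u, hu, rfl⟩
  exact hmin hu

lemma erealConvex_infProj [AddCommGroup E] [Module ℝ E] [AddCommGroup F] [Module ℝ F]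
    (hG : Convex ℝ G) (hH : ERealConvex H) (hbot : ∀ x, infProj G H x ≠ ⊥) :
    ERealConvex (infProj G H) := by
  refine .of_mem_Ioo fun x₁ x₂ s hs0 hs1 => EReal.le_coe_mul_add_coe_mul_of_forall_lt hs0 hs1
    (hbot x₁) (hbot x₂) fun a₁ a₂ h₁ h₂ => ?_
  obtain ⟨u₁, hu₁, hH₁⟩ := exists_lt_of_infProj_lt h₁
  obtain ⟨u₂, hu₂, hH₂⟩ := exists_lt_of_infProj_lt h₂
  have hs1' : (0 : ℝ) ≤ 1 - s := by linarith
  calc infProj G H (s • x₁ + (1 - s) • x₂)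
      ≤ H (s • (u₁, x₁) + (1 - s) • (u₂, x₂)) :=
        infProj_le (hG hu₁ hu₂ hs0.le hs1' (by ring))
    _ ≤ (s : EReal) * H (u₁, x₁) + ((1 - s : ℝ) : EReal) * H (u₂, x₂) :=
        hH _ _ s hs0.le hs1.le
    _ ≤ (s : EReal) * a₁ + ((1 - s : ℝ) : EReal) * a₂ :=
        add_le_add (mul_le_mul_of_nonneg_left hH₁.le (EReal.coe_nonneg.2 hs0.le))
          (mul_le_mul_of_nonneg_left hH₂.le (EReal.coe_nonneg.2 hs1'))

end InfProj

section Bellman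

variable {n p q : ℕ} {X : Set (Fin n → ℝ)} {f : (Fin n → ℝ) → (Fin n → ℝ) → EReal}
  {g : (Fin n → ℝ) → (Fin n → ℝ) → Fin p → ℝ} {A B : Matrix (Fin q) (Fin n) ℝ} {b : Fin q → ℝ}
  {Q' : (Fin n → ℝ) → EReal} {x : Fin n → ℝ}

/-- The admissible pairs `(xₜ, xₜ₋₁)` of one stage. -/
def feasible (X : Set (Fin n → ℝ)) (g : (Fin n → ℝ) → (Fin n → ℝ) → Fin p → ℝ)
    (A B : Matrix (Fin q) (Fin n) ℝ) (b : Fin q → ℝ) : Set ((Fin n → ℝ) × (Fin n → ℝ)) :=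
  {z | z.1 ∈ X ∧ (∀ i, g z.1 z.2 i ≤ 0) ∧ A *ᵥ z.1 + B *ᵥ z.2 = b}

/-- One step `Q_{t+1} ↦ Q_t` of the dynamic programming recursion. -/
noncomputable def bellman (X : Set (Fin n → ℝ)) (f : (Fin n → ℝ) → (Fin n → ℝ) → EReal)
    (g : (Fin n → ℝ) → (Fin n → ℝ) → Fin p → ℝ) (A B : Matrix (Fin q) (Fin n) ℝ)
    (b : Fin q → ℝ) (Q' : (Fin n → ℝ) → EReal) : (Fin n → ℝ) → EReal :=
  infProj (feasible X g A B b) fun z => f z.1 z.2 + Q' z.1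

lemma convex_feasible (hX : Convex ℝ X)
    (hg : ∀ i, ConvexOn ℝ univ fun z : (Fin n → ℝ) × (Fin n → ℝ) => g z.1 z.2 i) :
    Convex ℝ (feasible X g A B b) := by
  intro z₁ hz₁ z₂ hz₂ a c ha hc hac
  refine ⟨hX hz₁.1 hz₂.1 ha hc hac, fun i => ?_, ?_⟩
  · have h := (hg i).2 (mem_univ z₁) (mem_univ z₂) ha hc hac
    have h₁ := mul_nonpos_of_nonneg_of_nonpos ha (hz₁.2.1 i)
    have h₂ := mul_nonpos_of_nonneg_of_nonpos hc (hz₂.2.1 i)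
    simp only [smul_eq_mul] at h
    linarith
  · calc A *ᵥ (a • z₁ + c • z₂).1 + B *ᵥ (a • z₁ + c • z₂).2
        = a • (A *ᵥ z₁.1 + B *ᵥ z₁.2) + c • (A *ᵥ z₂.1 + B *ᵥ z₂.2) := by
          simp only [Prod.fst_add, Prod.snd_add, Prod.smul_fst, Prod.smul_snd, mulVec_add,
            mulVec_smul, smul_add]
          abel
      _ = b := by rw [hz₁.2.2, hz₂.2.2, ← add_smul, hac, one_smul]

lemma isClosed_feasible (hX : IsClosed X)
    (hg : ∀ i, LowerSemicontinuous fun z : (Fin n → ℝ) × (Fin n → ℝ) => g z.1 z.2 i) :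
    IsClosed (feasible X g A B b) := by
  have hineq : IsClosed {z : (Fin n → ℝ) × (Fin n → ℝ) | ∀ i, g z.1 z.2 i ≤ 0} := by
    simp only [ofPred_forall]
    exact isClosed_iInter fun i => (hg i).isClosed_preimage 0
  exact (hX.preimage continuous_fst).inter
    (hineq.inter (isClosed_eq (by fun_prop) continuous_const))

lemma bellman_ne_bot (hX : IsCompact X)
    (hg : ∀ i, LowerSemicontinuous fun z : (Fin n → ℝ) × (Fin n → ℝ) => g z.1 z.2 i)
    (hf : LowerSemicontinuous fun z : (Fin n → ℝ) × (Fin n → ℝ) => f z.1 z.2)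
    (hfbot : ∀ u x, f u x ≠ ⊥) (hQ' : ContinuousOn Q' X) (hQ'bot : ∀ u, Q' u ≠ ⊥)
    (x : Fin n → ℝ) : bellman X f g A B b Q' x ≠ ⊥ := by
  have hfibre : {u | (u, x) ∈ feasible X g A B b} ⊆ X := fun u hu => hu.1
  refine infProj_ne_bot (hX.of_isClosed_subset
    ((isClosed_feasible hX.isClosed hg).preimage (Continuous.prodMk_left x)) hfibre) ?_
    fun u => EReal.add_ne_bot_iff.2 ⟨hfbot u x, hQ'bot u⟩
  exact ((hf.comp (Continuous.prodMk_left x)).lowerSemicontinuousOn _).add'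
    (hQ'.mono hfibre).lowerSemicontinuousOn
    fun u _ => EReal.continuousAt_add (.inr (hQ'bot u)) (.inl (hfbot u x))

lemma bellman_ne_top (hrec : ∃ u ∈ X, (∀ i, g u x i ≤ 0) ∧ A *ᵥ u + B *ᵥ x = b)
    (hf : ∀ u ∈ X, f u x ≠ ⊤) (hQ' : ∀ u ∈ X, Q' u ≠ ⊤) : bellman X f g A B b Q' x ≠ ⊤ := by
  obtain ⟨u, hu, hg, hl⟩ := hrec
  exact ne_top_of_le_ne_top (EReal.add_ne_top (hf u hu) (hQ' u hu)) (infProj_le ⟨hu, hg, hl⟩)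

lemma erealConvex_bellman (hX : Convex ℝ X)
    (hf : ERealConvex fun z : (Fin n → ℝ) × (Fin n → ℝ) => f z.1 z.2)
    (hg : ∀ i, ConvexOn ℝ univ fun z : (Fin n → ℝ) × (Fin n → ℝ) => g z.1 z.2 i)
    (hQ' : ERealConvex Q') (hbot : ∀ x, bellman X f g A B b Q' x ≠ ⊥) :
    ERealConvex (bellman X f g A B b Q') :=
  erealConvex_infProj (convex_feasible hX hg)
    (hf.add (hQ'.comp_linearMap (LinearMap.fst ℝ (Fin n → ℝ) (Fin n → ℝ)))) hbot

end Bellman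

theorem stmt_2_general {n p q : ℕ} (T : ℕ)
    (X : ℕ → Set (Fin n → ℝ)) (ε : ℝ) (hε : 0 < ε)
    (f : ℕ → (Fin n → ℝ) → (Fin n → ℝ) → EReal)
    (g : ℕ → (Fin n → ℝ) → (Fin n → ℝ) → Fin p → ℝ)
    (A B : ℕ → Matrix (Fin q) (Fin n) ℝ) (b : ℕ → Fin q → ℝ)
    -- (H1)-(a)
    (hXcv : ∀ t, t ≤ T → Convex ℝ (X t))
    (hXcp : ∀ t, t ≤ T → IsCompact (X t))
    -- (H1)-(b): fₜ proper, convex, lower semicontinuous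
    (hfproper : ∀ t, 1 ≤ t → t ≤ T → ∀ u x, f t u x ≠ ⊥)
    (hfcv : ∀ t, 1 ≤ t → t ≤ T → ∀ u₁ x₁ u₂ x₂, ∀ s : ℝ, 0 ≤ s → s ≤ 1 →
      f t (s • u₁ + (1 - s) • u₂) (s • x₁ + (1 - s) • x₂)
        ≤ (s : EReal) * f t u₁ x₁ + ((1 - s : ℝ) : EReal) * f t u₂ x₂)
    (hflsc : ∀ t, 1 ≤ t → t ≤ T →
      LowerSemicontinuous (fun z : (Fin n → ℝ) × (Fin n → ℝ) => f t z.1 z.2))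
    -- (H1)-(c): each component of gₜ convex and lsc
    (hgcv : ∀ t, 1 ≤ t → t ≤ T → ∀ i,
      ConvexOn ℝ Set.univ (fun z : (Fin n → ℝ) × (Fin n → ℝ) => g t z.1 z.2 i))
    (hglsc : ∀ t, 1 ≤ t → t ≤ T → ∀ i,
      LowerSemicontinuous (fun z : (Fin n → ℝ) × (Fin n → ℝ) => g t z.1 z.2 i))
    -- (H1)-(d): domain condition and recourse on the ε-fattening
    (hdom : ∀ t, 1 ≤ t → t ≤ T → ∀ u ∈ X t,
      ∀ x ∈ Metric.cthickening ε (X (t - 1)), f t u x ≠ ⊤)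
    (hrec : ∀ t, 1 ≤ t → t ≤ T → ∀ x ∈ Metric.cthickening ε (X (t - 1)),
      ∃ u ∈ X t, (∀ i, g t u x i ≤ 0) ∧ (A t).mulVec u + (B t).mulVec x = b t)
    -- the dynamic programming recursion
    (Q : ℕ → (Fin n → ℝ) → EReal)
    (hQT : ∀ x, Q (T + 1) x = 0)
    (hQ : ∀ t, 1 ≤ t → t ≤ T → ∀ x, Q t x =
      sInf {v : EReal | ∃ u ∈ X t, (∀ i, g t u x i ≤ 0) ∧
        (A t).mulVec u + (B t).mulVec x = b t ∧ v = f t u x + Q (t + 1) u}) :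
    ∀ t, 1 ≤ t → t ≤ T + 1 →
      (∀ x₁ x₂, ∀ s : ℝ, 0 ≤ s → s ≤ 1 →
        Q t (s • x₁ + (1 - s) • x₂)
          ≤ (s : EReal) * Q t x₁ + ((1 - s : ℝ) : EReal) * Q t x₂) ∧
      (∀ x ∈ Metric.cthickening ε (X (t - 1)), Q t x ≠ ⊤ ∧ Q t x ≠ ⊥) ∧
      ContinuousOn (Q t) (X (t - 1)) := by
  have hQb : ∀ t, 1 ≤ t → t ≤ T → Q t = bellman (X t) (f t) (g t) (A t) (B t) (b t) (Q (t + 1)) :=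
    fun t h1 hT => funext fun x => by
      simp only [hQ t h1 hT x, bellman, infProj, feasible, mem_ofPred_eq, and_assoc]
  have key : ∀ t, t ≤ T + 1 → 1 ≤ t → ERealConvex (Q t) ∧ (∀ x, Q t x ≠ ⊥) ∧
      ∀ x ∈ cthickening ε (X (t - 1)), Q t x ≠ ⊤ := by
    intro t ht
    induction ht using Nat.decreasingInduction with
    | self => exact fun _ => ⟨by simp [ERealConvex, hQT], by simp [hQT], by simp [hQT]⟩
    | of_succ t ht ih =>
      intro h1
      have hT : t ≤ T := by omega
      obtain ⟨hcv, hbot, htop⟩ := ih (by omega)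
      have hVbot := bellman_ne_bot (A := A t) (B := B t) (b := b t) (hXcp t hT) (hglsc t h1 hT)
        (hflsc t h1 hT) (hfproper t h1 hT)
        (hcv.continuousOn_of_cthickening (hXcv t hT) hε fun x hx => ⟨htop x hx, hbot x⟩) hbot
      rw [hQb t h1 hT]
      exact ⟨erealConvex_bellman (hXcv t hT) (fun z₁ z₂ => hfcv t h1 hT z₁.1 z₁.2 z₂.1 z₂.2)
          (hgcv t h1 hT) hcv hVbot, hVbot,
        fun x hx => bellman_ne_top (hrec t h1 hT x hx) (fun u hu => hdom t h1 hT u hu x hx)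
          fun u hu => htop u (self_subset_cthickening _ hu)⟩
  intro t h1 ht
  obtain ⟨hcv, hbot, htop⟩ := key t ht h1
  exact ⟨hcv, fun x hx => ⟨htop x hx, hbot x⟩,
    hcv.continuousOn_of_cthickening (hXcv (t - 1) (by omega)) hε fun x hx => ⟨htop x hx, hbot x⟩⟩

/-- Under (H1), the cost-to-go functions `Q_t` of the multistage convex problem are
convex, finite on the ε-fattening `X_{t-1}^ε`, and continuous on `X_{t-1}`. -/
theorem stmt_2 {n p q : ℕ} (T : ℕ) (hT : 1 ≤ T)
    (X : ℕ → Set (Fin n → ℝ)) (ε : ℝ) (hε : 0 < ε)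
    (f : ℕ → (Fin n → ℝ) → (Fin n → ℝ) → EReal)
    (g : ℕ → (Fin n → ℝ) → (Fin n → ℝ) → Fin p → ℝ)
    (A B : ℕ → Matrix (Fin q) (Fin n) ℝ) (b : ℕ → Fin q → ℝ)
    -- (H1)-(a)
    (hXne : ∀ t, t ≤ T → (X t).Nonempty)
    (hXcv : ∀ t, t ≤ T → Convex ℝ (X t))
    (hXcp : ∀ t, t ≤ T → IsCompact (X t))
    -- (H1)-(b): fₜ proper, convex, lower semicontinuous
    (hfproper : ∀ t, 1 ≤ t → t ≤ T → ∀ u x, f t u x ≠ ⊥)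
    (hfcv : ∀ t, 1 ≤ t → t ≤ T → ∀ u₁ x₁ u₂ x₂, ∀ s : ℝ, 0 ≤ s → s ≤ 1 →
      f t (s • u₁ + (1 - s) • u₂) (s • x₁ + (1 - s) • x₂)
        ≤ (s : EReal) * f t u₁ x₁ + ((1 - s : ℝ) : EReal) * f t u₂ x₂)
    (hflsc : ∀ t, 1 ≤ t → t ≤ T →
      LowerSemicontinuous (fun z : (Fin n → ℝ) × (Fin n → ℝ) => f t z.1 z.2))
    -- (H1)-(c): each component of gₜ convex and lsc
    (hgcv : ∀ t, 1 ≤ t → t ≤ T → ∀ i,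
      ConvexOn ℝ Set.univ (fun z : (Fin n → ℝ) × (Fin n → ℝ) => g t z.1 z.2 i))
    (hglsc : ∀ t, 1 ≤ t → t ≤ T → ∀ i,
      LowerSemicontinuous (fun z : (Fin n → ℝ) × (Fin n → ℝ) => g t z.1 z.2 i))
    -- (H1)-(d): domain condition and recourse on the ε-fattening
    (hdom : ∀ t, 1 ≤ t → t ≤ T → ∀ u ∈ X t,
      ∀ x ∈ Metric.cthickening ε (X (t - 1)), f t u x ≠ ⊤)
    (hrec : ∀ t, 1 ≤ t → t ≤ T → ∀ x ∈ Metric.cthickening ε (X (t - 1)),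
      ∃ u ∈ X t, (∀ i, g t u x i ≤ 0) ∧ (A t).mulVec u + (B t).mulVec x = b t)
    -- the dynamic programming recursion
    (Q : ℕ → (Fin n → ℝ) → EReal)
    (hQT : ∀ x, Q (T + 1) x = 0)
    (hQ : ∀ t, 1 ≤ t → t ≤ T → ∀ x, Q t x =
      sInf {v : EReal | ∃ u ∈ X t, (∀ i, g t u x i ≤ 0) ∧
        (A t).mulVec u + (B t).mulVec x = b t ∧ v = f t u x + Q (t + 1) u}) :
    ∀ t, 1 ≤ t → t ≤ T + 1 →
      (∀ x₁ x₂, ∀ s : ℝ, 0 ≤ s → s ≤ 1 →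
        Q t (s • x₁ + (1 - s) • x₂)
          ≤ (s : EReal) * Q t x₁ + ((1 - s : ℝ) : EReal) * Q t x₂) ∧
      (∀ x ∈ Metric.cthickening ε (X (t - 1)), Q t x ≠ ⊤ ∧ Q t x ≠ ⊥) ∧
      ContinuousOn (Q t) (X (t - 1)) :=
  stmt_2_general T X ε hε f g A B b hXcv hXcp hfproper hfcv hflsc hgcv hglsc hdom hrec Q hQT hQ
end

section
/- The Level 1 cut selection rule satisfies Assumption (H2): defining Q_t^k(x) = max_{ℓ ∈ S_t^k} C_t^ℓ(x) with S_t^k = ∪_{i=1}^k argmax_{ℓ=1,…,k} C_t^ℓ(x_{t-1}^i), one has for all t and all k₁ ≤ k₂: (i) Q_t^{k₁}(x_{t-1}^{k₁}) ≥ C_t^{k₁}(x_{t-1}^{k₁}), and (ii) Q_t^{k₂}(x_{t-1}^j) ≥ Q_t^{k₁}(x_{t-1}^j) for every j = 1,…,k₂. -/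
open Matrix

lemma exists_argmax_aux (f : ℕ → ℝ) (k : ℕ) (hk : 1 ≤ k) :
    ∃ m, 1 ≤ m ∧ m ≤ k ∧ ∀ ℓ, 1 ≤ ℓ → ℓ ≤ k → f ℓ ≤ f m := by
  obtain ⟨m, hm, hmax⟩ := Finset.exists_max_image (Finset.Icc 1 k) f
    ⟨1, by simp [hk]⟩
  simp only [Finset.mem_Icc] at hm
  exact ⟨m, hm.1, hm.2, fun ℓ h1 h2 => hmax ℓ (Finset.mem_Icc.mpr ⟨h1, h2⟩)⟩

/-- The Level 1 cut selection rule satisfies Assumption (H2): with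
`S_t^k = ⋃_{i=1}^k argmax_{ℓ=1..k} C_t^ℓ(x_{t-1}^i)` and
`Q_t^k = max_{ℓ ∈ S_t^k} C_t^ℓ`, the heights at the trial points satisfy
`Q_t^{k}(x^{k}) ≥ C_t^{k}(x^{k})` and are nondecreasing in `k`. -/
theorem stmt_5 {n : ℕ}
    (C : ℕ → (Fin n → ℝ) → ℝ)            -- the cuts C_t^ℓ, ℓ = 1, 2, ...
    (θ : ℕ → ℝ) (β : ℕ → (Fin n → ℝ)) (xp : ℕ → (Fin n → ℝ))
    (hC : ∀ ℓ x, C ℓ x = θ ℓ + dotProduct (β ℓ) (x - xp ℓ))  -- cuts are affine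
    (xt : ℕ → (Fin n → ℝ))               -- the trial points x_{t-1}^i, i = 1, 2, ...
    (S : ℕ → Set ℕ)
    (hS : ∀ k, S k = {ℓ | 1 ≤ ℓ ∧ ℓ ≤ k ∧ ∃ i, 1 ≤ i ∧ i ≤ k ∧
      ∀ ℓ', 1 ≤ ℓ' → ℓ' ≤ k → C ℓ' (xt i) ≤ C ℓ (xt i)})
    (Qk : ℕ → (Fin n → ℝ) → ℝ)
    (hQk : ∀ k x, Qk k x = sSup {v : ℝ | ∃ ℓ ∈ S k, v = C ℓ x}) :
    (∀ k, 1 ≤ k → C k (xt k) ≤ Qk k (xt k)) ∧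
    (∀ k₁ k₂, 1 ≤ k₁ → k₁ ≤ k₂ → ∀ j, 1 ≤ j → j ≤ k₂ →
      Qk k₁ (xt j) ≤ Qk k₂ (xt j)) := by
  -- the value sets are bounded above
  have hbdd : ∀ k x, BddAbove {v : ℝ | ∃ ℓ ∈ S k, v = C ℓ x} := by
    intro k x
    have hsub : {v : ℝ | ∃ ℓ ∈ S k, v = C ℓ x} ⊆ (fun ℓ => C ℓ x) '' (Set.Icc 1 k) := by
      rintro v ⟨ℓ, hℓ, rfl⟩
      rw [hS k] at hℓ
      exact ⟨ℓ, ⟨hℓ.1, hℓ.2.1⟩, rfl⟩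
    exact (((Set.finite_Icc 1 k).image _).bddAbove).mono hsub
  -- argmax membership in S k
  have hmem : ∀ k i, 1 ≤ k → 1 ≤ i → i ≤ k →
      ∃ m ∈ S k, ∀ ℓ, 1 ≤ ℓ → ℓ ≤ k → C ℓ (xt i) ≤ C m (xt i) := by
    intro k i hk hi1 hi2
    obtain ⟨m, hm1, hm2, hmax⟩ := exists_argmax_aux (fun ℓ => C ℓ (xt i)) k hk
    refine ⟨m, ?_, hmax⟩
    rw [hS k]
    exact ⟨hm1, hm2, i, hi1, hi2, hmax⟩
  constructor
  · intro k hk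
    obtain ⟨m, hmS, hmax⟩ := hmem k k hk hk le_rfl
    rw [hQk]
    exact le_trans (hmax k hk le_rfl)
      (le_csSup (hbdd k (xt k)) ⟨m, hmS, rfl⟩)
  · intro k₁ k₂ hk₁ h12 j hj1 hj2
    rw [hQk, hQk]
    obtain ⟨m₀, hm₀S, _⟩ := hmem k₁ k₁ hk₁ hk₁ le_rfl
    refine csSup_le ⟨C m₀ (xt j), m₀, hm₀S, rfl⟩ ?_
    rintro v ⟨ℓ, hℓ, rfl⟩
    rw [hS k₁] at hℓ
    obtain ⟨m, hmS, hmax⟩ := hmem k₂ j (le_trans hk₁ h12) hj1 hj2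
    exact le_trans (hmax ℓ hℓ.1 (le_trans hℓ.2.1 h12))
      (le_csSup (hbdd k₂ (xt j)) ⟨m, hmS, rfl⟩)
end

section
/- The limited memory variant of Level 1 cut selection, which at each trial point x_{t-1}^i keeps only the index of the oldest cut achieving the maximum value at that point, also satisfies: Q_t^k(x_{t-1}^j) = max_{ℓ=1,…,k} C_t^ℓ(x_{t-1}^j) for all j ≤ k, and hence Assumption (H2) holds (heights at trial points are nondecreasing in k and Q_t^k(x_{t-1}^k) ≥ C_t^k(x_{t-1}^k)). -/
open Matrix

/-- The limited memory variant of Level 1 cut selection (at each trial point only the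
oldest cut attaining the maximum is kept) still coincides at all trial points with
the maximum over all cuts computed so far, and hence satisfies Assumption (H2). -/
theorem stmt_7 {n : ℕ}
    (C : ℕ → (Fin n → ℝ) → ℝ)            -- the cuts C_t^ℓ, ℓ = 1, 2, ...
    (θ : ℕ → ℝ) (β : ℕ → (Fin n → ℝ)) (xp : ℕ → (Fin n → ℝ))
    (hC : ∀ ℓ x, C ℓ x = θ ℓ + dotProduct (β ℓ) (x - xp ℓ))  -- cuts are affine
    (xt : ℕ → (Fin n → ℝ))               -- the trial points x_{t-1}^i, i = 1, 2, ...
    -- Ĩ k i : the oldest among the cuts 1..k with the highest value at x_{t-1}^i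
    (I : ℕ → ℕ → ℕ)
    (hImem : ∀ k i, 1 ≤ k → 1 ≤ I k i ∧ I k i ≤ k)
    (hImax : ∀ k i, 1 ≤ k → ∀ ℓ, 1 ≤ ℓ → ℓ ≤ k → C ℓ (xt i) ≤ C (I k i) (xt i))
    (hIold : ∀ k i, 1 ≤ k → ∀ ℓ, 1 ≤ ℓ → ℓ < I k i → C ℓ (xt i) < C (I k i) (xt i))
    (S : ℕ → Set ℕ)
    (hS : ∀ k, S k = {ℓ | ∃ i, 1 ≤ i ∧ i ≤ k ∧ ℓ = I k i})
    (Qk : ℕ → (Fin n → ℝ) → ℝ)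
    (hQk : ∀ k x, Qk k x = sSup {v : ℝ | ∃ ℓ ∈ S k, v = C ℓ x}) :
    (∀ k, 1 ≤ k → ∀ j, 1 ≤ j → j ≤ k →
      Qk k (xt j) = sSup {v : ℝ | ∃ ℓ, 1 ≤ ℓ ∧ ℓ ≤ k ∧ v = C ℓ (xt j)}) ∧
    (∀ k, 1 ≤ k → C k (xt k) ≤ Qk k (xt k)) ∧
    (∀ k₁ k₂, 1 ≤ k₁ → k₁ ≤ k₂ → ∀ j, 1 ≤ j → j ≤ k₂ →
      Qk k₁ (xt j) ≤ Qk k₂ (xt j)) := by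

  -- Key claim: Qk k (xt j) equals C (I k j) (xt j), the max of all cuts, for 1 ≤ j ≤ k.
  have hgreatS : ∀ k, 1 ≤ k → ∀ j, 1 ≤ j → j ≤ k →
      IsGreatest {v : ℝ | ∃ ℓ ∈ S k, v = C ℓ (xt j)} (C (I k j) (xt j)) := by
    intro k hk j hj hjk
    constructor
    · exact ⟨I k j, by rw [hS]; exact ⟨j, hj, hjk, rfl⟩, rfl⟩
    · rintro v ⟨ℓ, hℓ, rfl⟩
      rw [hS] at hℓ
      obtain ⟨i, hi1, hik, rfl⟩ := hℓ
      exact hImax k j hk _ (hImem k i hk).1 (hImem k i hk).2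
  have hgreatAll : ∀ k, 1 ≤ k → ∀ j, 1 ≤ j → j ≤ k →
      IsGreatest {v : ℝ | ∃ ℓ, 1 ≤ ℓ ∧ ℓ ≤ k ∧ v = C ℓ (xt j)} (C (I k j) (xt j)) := by
    intro k hk j hj hjk
    constructor
    · exact ⟨I k j, (hImem k j hk).1, (hImem k j hk).2, rfl⟩
    · rintro v ⟨ℓ, h1, h2, rfl⟩
      exact hImax k j hk ℓ h1 h2
  have hQval : ∀ k, 1 ≤ k → ∀ j, 1 ≤ j → j ≤ k → Qk k (xt j) = C (I k j) (xt j) := by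
    intro k hk j hj hjk
    rw [hQk]
    exact (hgreatS k hk j hj hjk).csSup_eq
  refine ⟨?_, ?_, ?_⟩
  · intro k hk j hj hjk
    rw [hQval k hk j hj hjk, (hgreatAll k hk j hj hjk).csSup_eq]
  · intro k hk
    rw [hQval k hk k hk le_rfl]
    exact hImax k k hk k hk le_rfl
  · intro k₁ k₂ h1 h12 j hj hjk2
    have hk2 : 1 ≤ k₂ := le_trans h1 h12
    rw [hQk, hQval k₂ hk2 j hj hjk2]
    apply csSup_le
    · exact ⟨C (I k₁ 1) (xt j), I k₁ 1, by rw [hS]; exact ⟨1, le_rfl, h1, rfl⟩, rfl⟩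
    · rintro v ⟨ℓ, hℓ, rfl⟩
      rw [hS] at hℓ
      obtain ⟨i, hi1, hik, rfl⟩ := hℓ
      exact hImax k₂ j hk2 _ (hImem k₁ i h1).1 (le_trans (hImem k₁ i h1).2 h12)
end

section
/- Let (Q^k)_{k≥1} be functions on a set X, L-Lipschitz uniformly in k for k ≥ k₀, with Q^{k₂}(x^j) ≥ Q^{k₁}(x^j) whenever k₁ ≤ k₂ and j ≤ k₂, where (x^k) ⊆ X. If a subsequence x^{y_k} converges to x* and lim_{k→∞} Q^{y_k}(x^{y_k}) = ℓ exists, then lim_{k→∞} Q^{y_k − 1}(x^{y_k}) = ℓ as well. -/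
open Filter

/-- If the `Q^k` are uniformly `L`-Lipschitz on `X` for `k ≥ k₀`, satisfy the (H2)
monotonicity `Q^{k₁}(x^j) ≤ Q^{k₂}(x^j)` for `k₁ ≤ k₂`, `j ≤ k₂`, and if along a
subsequence `x^{y_k} → x*` with `Q^{y_k}(x^{y_k}) → ℓ`, then also
`Q^{y_k - 1}(x^{y_k}) → ℓ`. -/
theorem stmt_9 {n : ℕ}
    (X : Set (Fin n → ℝ))
    (x : ℕ → (Fin n → ℝ)) (hx : ∀ k, x k ∈ X)
    (Q : ℕ → (Fin n → ℝ) → ℝ)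
    (k₀ : ℕ) (L : ℝ)
    (hLip : ∀ k, k₀ ≤ k → ∀ u ∈ X, ∀ v ∈ X, |Q k u - Q k v| ≤ L * ‖u - v‖)
    (hmono : ∀ k₁ k₂, k₁ ≤ k₂ → ∀ j, j ≤ k₂ → Q k₁ (x j) ≤ Q k₂ (x j))
    (y : ℕ → ℕ) (hy : StrictMono y)
    (xstar : Fin n → ℝ)
    (hconv : Tendsto (fun k => x (y k)) atTop (nhds xstar))
    (ℓ : ℝ)
    (hℓ : Tendsto (fun k => Q (y k) (x (y k))) atTop (nhds ℓ)) :
    Tendsto (fun k => Q (y k - 1) (x (y k))) atTop (nhds ℓ) := by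
  -- lower bound sequence
  have hsub : Tendsto (fun k : ℕ => k - 1) atTop atTop :=
    tendsto_sub_atTop_nat 1
  have hℓ' : Tendsto (fun k => Q (y (k - 1)) (x (y (k - 1)))) atTop (nhds ℓ) :=
    hℓ.comp hsub
  have hconv' : Tendsto (fun k => x (y (k - 1))) atTop (nhds xstar) :=
    hconv.comp hsub
  have hdiff : Tendsto (fun k => L * ‖x (y k) - x (y (k - 1))‖) atTop (nhds 0) := by
    have : Tendsto (fun k => x (y k) - x (y (k - 1))) atTop (nhds (xstar - xstar)) :=
      hconv.sub hconv'
    rw [sub_self] at this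
    have := (this.norm).const_mul L
    simpa using this
  have hlow : Tendsto (fun k => Q (y (k - 1)) (x (y (k - 1))) -
      L * ‖x (y k) - x (y (k - 1))‖) atTop (nhds ℓ) := by
    simpa using hℓ'.sub hdiff
  refine tendsto_of_tendsto_of_tendsto_of_le_of_le' hlow hℓ ?_ ?_
  · -- eventual lower bound
    filter_upwards [eventually_ge_atTop (k₀ + 1)] with k hk
    have hyk : k ≤ y k := hy.le_apply
    have hk1 : 1 ≤ k := le_trans (Nat.le_add_left 1 k₀) hk
    have hk0' : k₀ ≤ y k - 1 := by omega
    have hylt : y (k - 1) < y k := hy (by omega)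
    have hmono1 : Q (y (k - 1)) (x (y (k - 1))) ≤ Q (y k - 1) (x (y (k - 1))) :=
      hmono _ _ (by omega) _ (by omega)
    have hlip := hLip (y k - 1) hk0' (x (y k)) (hx _) (x (y (k - 1))) (hx _)
    have := abs_le.mp hlip
    linarith [this.1]
  · -- eventual upper bound
    filter_upwards [eventually_ge_atTop 1] with k hk
    exact hmono _ _ (Nat.sub_le _ _) _ le_rfl
end

section
/- Sandwich step of the DDP convergence proof: under (H1) and (H2), for every iteration k, Q_t(x_{t-1}^k) ≥ Q_t^k(x_{t-1}^k) ≥ θ_t^k = f_t(x_t^k, x_{t-1}^k) + Q_{t+1}^{k-1}(x_t^k) ≥ Q_t(x_{t-1}^k) − (Q_{t+1}(x_t^k) − Q_{t+1}^{k-1}(x_t^k)). Consequently, if Q_{t+1}(x_t^k) − Q_{t+1}^{k-1}(x_t^k) → 0 along a subsequence with x_{t-1}^k → x*_{t-1}, and Q_t is continuous, then Q_t^k(x_{t-1}^k) → Q_t(x*_{t-1}) along that subsequence. -/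
open Filter

/-- Sandwich step of the DDP convergence proof:
`Q_t(x_{t-1}^k) ≥ Q_t^k(x_{t-1}^k) ≥ θ_t^k ≥ Q_t(x_{t-1}^k) − (Q_{t+1}(x_t^k) − Q_{t+1}^{k-1}(x_t^k))`,
and if the gap `Q_{t+1}(x_t^k) − Q_{t+1}^{k-1}(x_t^k) → 0` along a subsequence with
`x_{t-1}^k → x*` and `Q_t` continuous, then `Q_t^k(x_{t-1}^k) → Q_t(x*)`. -/
theorem stmt_10 {n : ℕ}
    (Xprev : Set (Fin n → ℝ))
    (feas : (Fin n → ℝ) → Set (Fin n → ℝ))  -- feasible set of stage t given x_{t-1}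
    (f : (Fin n → ℝ) → (Fin n → ℝ) → ℝ)     -- f_t(x_t, x_{t-1})
    (Qnext Qt : (Fin n → ℝ) → ℝ)            -- Q_{t+1} and Q_t
    (hQt : ∀ x, Qt x = sInf {v : ℝ | ∃ u ∈ feas x, v = f u x + Qnext u})
    (hbdd : ∀ x, BddBelow {v : ℝ | ∃ u ∈ feas x, v = f u x + Qnext u})
    (Qnextk : ℕ → (Fin n → ℝ) → ℝ)          -- lower approximations Q_{t+1}^k
    (hle : ∀ k u, Qnextk k u ≤ Qnext u)
    (Qtk : ℕ → (Fin n → ℝ) → ℝ)             -- selected approximations Q_t^k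
    (hQtkle : ∀ k x, Qtk k x ≤ Qt x)
    (xp xc : ℕ → (Fin n → ℝ))               -- trial points x_{t-1}^k and iterates x_t^k
    (hfeas : ∀ k, xc k ∈ feas (xp k))
    (θ : ℕ → ℝ)
    (hθ : ∀ k, θ k = f (xc k) (xp k) + Qnextk (k - 1) (xc k))  -- θ_t^k = Q̲_t^k(x_{t-1}^k)
    (hH2 : ∀ k, θ k ≤ Qtk k (xp k)) :       -- (H2): Q_t^k(x_{t-1}^k) ≥ C_t^k(x_{t-1}^k) = θ_t^k
    (∀ k, Qt (xp k) - (Qnext (xc k) - Qnextk (k - 1) (xc k)) ≤ θ k ∧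
          θ k ≤ Qtk k (xp k) ∧ Qtk k (xp k) ≤ Qt (xp k)) ∧
    (∀ (y : ℕ → ℕ), StrictMono y → ∀ xstar ∈ Xprev, (∀ k, xp k ∈ Xprev) →
      ContinuousOn Qt Xprev →
      Tendsto (fun k => xp (y k)) atTop (nhds xstar) →
      Tendsto (fun k => Qnext (xc (y k)) - Qnextk (y k - 1) (xc (y k))) atTop (nhds 0) →
      Tendsto (fun k => Qtk (y k) (xp (y k))) atTop (nhds (Qt xstar))) := by

  have key : ∀ k, Qt (xp k) - (Qnext (xc k) - Qnextk (k - 1) (xc k)) ≤ θ k := by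
    intro k
    have h1 : Qt (xp k) ≤ f (xc k) (xp k) + Qnext (xc k) := by
      rw [hQt]
      exact csInf_le (hbdd _) ⟨xc k, hfeas k, rfl⟩
    rw [hθ]; linarith
  refine ⟨fun k => ⟨key k, hH2 k, hQtkle k _⟩, ?_⟩
  intro y hy xstar hxstar hxp hcont hxptend hgap
  have hQttend : Tendsto (fun k => Qt (xp (y k))) atTop (nhds (Qt xstar)) := by
    have := (hcont xstar hxstar).tendsto
    exact this.comp (tendsto_nhdsWithin_iff.mpr ⟨hxptend, Eventually.of_forall fun k => hxp _⟩)
  have hlo : Tendsto (fun k => Qt (xp (y k)) - (Qnext (xc (y k)) - Qnextk (y k - 1) (xc (y k))))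
      atTop (nhds (Qt xstar)) := by
    simpa using hQttend.sub hgap
  refine tendsto_of_tendsto_of_tendsto_of_le_of_le hlo hQttend ?_ ?_
  · intro k; exact le_trans (key (y k)) (hH2 (y k))
  · intro k; exact hQtkle _ _
end

section
/- Optimality via lower semicontinuity: suppose f_t is lsc, Q_{t+1} is continuous, F_t(x,y) = f_t(x,y) + Q_{t+1}(x), and along a subsequence (x_t^k, x_{t-1}^k) → (x_t*, x_{t-1}*) with f_t(x_t^k, x_{t-1}^k) + Q_{t+1}^{k-1}(x_t^k) → Q_t(x_{t-1}*) and Q_{t+1}(x_t^k) − Q_{t+1}^{k-1}(x_t^k) → 0. Then F_t(x_t*, x_{t-1}*) ≤ Q_t(x_{t-1}*); in particular, if x_t* is feasible for the stage-t problem at x_{t-1}*, then x_t* is an optimal solution of that problem. -/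
open Filter

/-- Optimality via lower semicontinuity: if along a subsequence
`(x_t^k, x_{t-1}^k) → (x_t^*, x_{t-1}^*)`, the approximate values
`f_t(x_t^k, x_{t-1}^k) + Q_{t+1}^{k-1}(x_t^k)` converge to `Q_t(x_{t-1}^*)` and the
gap `Q_{t+1}(x_t^k) − Q_{t+1}^{k-1}(x_t^k) → 0`, then
`F_t(x_t^*, x_{t-1}^*) ≤ Q_t(x_{t-1}^*)`; in particular if `x_t^*` is feasible it is
an optimal solution of the stage-`t` problem at `x_{t-1}^*`. -/
theorem stmt_15 {n : ℕ}
    (feas : (Fin n → ℝ) → Set (Fin n → ℝ))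
    (f : (Fin n → ℝ) → (Fin n → ℝ) → ℝ)
    (hf : LowerSemicontinuous (fun z : (Fin n → ℝ) × (Fin n → ℝ) => f z.1 z.2))
    (Qnext : (Fin n → ℝ) → ℝ) (hQnext : Continuous Qnext)
    (Qt : (Fin n → ℝ) → ℝ)
    (hQt : ∀ x, Qt x = sInf {v : ℝ | ∃ u ∈ feas x, v = f u x + Qnext u})
    (hbdd : ∀ x, BddBelow {v : ℝ | ∃ u ∈ feas x, v = f u x + Qnext u})
    (Qk : ℕ → (Fin n → ℝ) → ℝ)            -- the lower approximations Q_{t+1}^{k-1}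
    (xc xp : ℕ → (Fin n → ℝ))
    (xcs xps : Fin n → ℝ)
    (hc : Tendsto xc atTop (nhds xcs))
    (hp : Tendsto xp atTop (nhds xps))
    (hval : Tendsto (fun k => f (xc k) (xp k) + Qk k (xc k)) atTop (nhds (Qt xps)))
    (hgap : Tendsto (fun k => Qnext (xc k) - Qk k (xc k)) atTop (nhds 0)) :
    f xcs xps + Qnext xcs ≤ Qt xps ∧
    (xcs ∈ feas xps → f xcs xps + Qnext xcs = Qt xps) := by

  -- g k = f (xc k) (xp k) + Qnext (xc k) tends to Qt xps
  have hg : Tendsto (fun k => f (xc k) (xp k) + Qnext (xc k)) atTop (nhds (Qt xps)) := by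
    have := hval.add hgap
    simp only [add_zero] at this
    convert this using 2 with k
    ring
  -- Qnext (xc k) → Qnext xcs
  have hQc : Tendsto (fun k => Qnext (xc k)) atTop (nhds (Qnext xcs)) :=
    (hQnext.tendsto xcs).comp hc
  -- f (xc k) (xp k) → Qt xps - Qnext xcs
  have hfl : Tendsto (fun k => f (xc k) (xp k)) atTop (nhds (Qt xps - Qnext xcs)) := by
    have := hg.sub hQc
    convert this using 2 with k
    ring
  have hpair : Tendsto (fun k => (xc k, xp k)) atTop (nhds (xcs, xps)) :=
    hc.prodMk_nhds hp
  -- lsc bound: f xcs xps ≤ Qt xps - Qnext xcs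
  have hle : f xcs xps ≤ Qt xps - Qnext xcs := by
    by_contra h
    push_neg at h
    set L := Qt xps - Qnext xcs with hL
    set y := (L + f xcs xps) / 2 with hy
    have hyL : L < y := by simp only [hy]; linarith
    have hyf : y < f xcs xps := by simp only [hy]; linarith
    have hev : ∀ᶠ z : (Fin n → ℝ) × (Fin n → ℝ) in nhds (xcs, xps), y < f z.1 z.2 :=
      hf (xcs, xps) y hyf
    have hev2 : ∀ᶠ k in atTop, y < f (xc k) (xp k) := hpair.eventually hev
    have : y ≤ L := ge_of_tendsto hfl (hev2.mono fun k hk => hk.le)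
    linarith
  have h1 : f xcs xps + Qnext xcs ≤ Qt xps := by linarith
  refine ⟨h1, fun hfeas => le_antisymm h1 ?_⟩
  rw [hQt xps]
  exact csInf_le (hbdd xps) ⟨xcs, hfeas, rfl⟩
end

section
/- Exactness propagation in the finite-convergence proof: suppose after stabilization at iteration k₀ no new cut can improve any approximation at the current trial points. If Q̲_{t+1}^{k₀}(x_t^{k₀}) = Q_{t+1}(x_t^{k₀}) (induction hypothesis H₂(t+1)) and Q_{t+1}^{k₀−1}(x_t^{k₀}) < Q_{t+1}(x_t^{k₀}) were strict, then the cut added at iteration k₀ at x_t^{k₀} would have height Q̲_{t+1}^{k₀}(x_t^{k₀}) > Q_{t+1}^{k₀−1}(x_t^{k₀}), contradicting stabilization; hence Q_{t+1}^{k₀−1}(x_t^{k₀}) = Q_{t+1}(x_t^{k₀}) and therefore Q̲_t^{k₀}(x_{t-1}^{k₀}) = Q_t(x_{t-1}^{k₀}). -/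
/-- Exactness propagation in the finite-convergence proof: if after stabilization the
cut that would be added at `x_t^{k₀}` (of height `Q̲_{t+1}^{k₀}(x_t^{k₀})`) cannot
improve the current approximation, and `Q̲_{t+1}^{k₀}(x_t^{k₀}) = Q_{t+1}(x_t^{k₀})`
(induction hypothesis `H₂(t+1)`), then `Q_{t+1}^{k₀−1}(x_t^{k₀}) = Q_{t+1}(x_t^{k₀})`
and consequently `Q̲_t^{k₀}(x_{t-1}^{k₀}) = Q_t(x_{t-1}^{k₀})`. -/
theorem stmt_18 {n : ℕ}
    (feas : (Fin n → ℝ) → Set (Fin n → ℝ))   -- stage-t feasible set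
    (f : (Fin n → ℝ) → (Fin n → ℝ) → ℝ)      -- f_t
    (Qnext : (Fin n → ℝ) → ℝ)                -- Q_{t+1}
    (Qapprox : (Fin n → ℝ) → ℝ)              -- Q_{t+1}^{k₀−1}
    (Qlownext : (Fin n → ℝ) → ℝ)             -- Q̲_{t+1}^{k₀}
    (Qt Qlowt : (Fin n → ℝ) → ℝ)             -- Q_t and Q̲_t^{k₀}
    (hQt : ∀ x, Qt x = sInf {v : ℝ | ∃ u ∈ feas x, v = f u x + Qnext u})
    (hbdd : ∀ x, BddBelow {v : ℝ | ∃ u ∈ feas x, v = f u x + Qnext u})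
    (xt xprev : Fin n → ℝ)                   -- x_t^{k₀} and x_{t-1}^{k₀}
    (hfeas : xt ∈ feas xprev)
    -- x_t^{k₀} attains Q̲_t^{k₀}(x_{t-1}^{k₀})
    (hattain : Qlowt xprev = f xt xprev + Qapprox xt)
    -- Q̲_t^{k₀} ≤ Q_t and Q_{t+1}^{k₀−1} ≤ Q_{t+1} always
    (hlowle : ∀ x, Qlowt x ≤ Qt x)
    (happle : ∀ u, Qapprox u ≤ Qnext u)
    -- induction hypothesis H₂(t+1)
    (hH2next : Qlownext xt = Qnext xt)
    -- stabilization: the cut added at iteration k₀ at x_t^{k₀}, of height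
    -- Q̲_{t+1}^{k₀}(x_t^{k₀}), does not exceed the current approximation there
    (hstab : Qlownext xt ≤ Qapprox xt) :
    Qapprox xt = Qnext xt ∧ Qlowt xprev = Qt xprev := by
  have h1 : Qapprox xt = Qnext xt := le_antisymm (happle xt) (hH2next ▸ hstab)
  refine ⟨h1, le_antisymm (hlowle xprev) ?_⟩
  rw [hQt, hattain, h1]
  exact csInf_le (hbdd xprev) ⟨xt, hfeas, rfl⟩
end
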